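/- Let r ≥ 3 and let G be a linear r-graph with an edge e = {u_1,...,u_r} such that d(u_i) ≥ (r-i)(r-1) + 2 for each 2 ≤ i ≤ r - 1, d(u_r) ≥ 2, and d(u_1) ≥ (r-1)^2 + 2. Then G contains a copy of the r-crown C_{1r}: one can greedily choose, for i from r down to 1, a u_i-edge e_{r-i+1} ≠ e disjoint from the previously chosen edges, yielding r pairwise disjoint edges each meeting e in exactly one vertex. -/

import Mathlib

open Finset

/-- A linear `r`-uniform hypergraph: every edge has `r` vertices and
any two distinct edges intersect in at most one vertex. -/
def IsLinear {V : Type*} [DecidableEq V] (r : ℕ) (E : Finset (Finset V)) : Prop :=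
  (∀ e ∈ E, e.card = r) ∧ ∀ e ∈ E, ∀ f ∈ E, e ≠ f → (e ∩ f).card ≤ 1

/-- The degree of a vertex: the number of edges containing it. -/
def degree {V : Type*} [DecidableEq V] (E : Finset (Finset V)) (v : V) : ℕ :=
  (E.filter (fun e => v ∈ e)).card

/-- `E` contains a copy of the `r`-crown `C_{1r}`: `r` pairwise disjoint edges
together with one edge meeting each of them in exactly one vertex. -/
def HasCrown {V : Type*} [DecidableEq V] (r : ℕ) (E : Finset (Finset V)) : Prop :=
  ∃ e ∈ E, ∃ f : Fin r → Finset V,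
    (∀ i, f i ∈ E) ∧ (∀ i, f i ≠ e) ∧
    (∀ i j, i ≠ j → f i ∩ f j = ∅) ∧
    (∀ i, (e ∩ f i).card = 1)

/-- `E` contains a copy of `C*`: `r-2` edges pairwise meeting exactly in a common
vertex `v`, two further edges disjoint from each other and from all the others,
and one edge meeting each of the `r` edges in exactly one vertex, avoiding `v`. -/
def HasCStar {V : Type*} [DecidableEq V] (r : ℕ) (E : Finset (Finset V)) : Prop :=
  ∃ v : V, ∃ e ∈ E, ∃ f : Fin r → Finset V,
    (∀ i, f i ∈ E) ∧ (∀ i, f i ≠ e) ∧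
    (∀ i : Fin r, (i : ℕ) < r - 2 → v ∈ f i) ∧
    (∀ i j : Fin r, (i : ℕ) < r - 2 → (j : ℕ) < r - 2 → i ≠ j → f i ∩ f j = {v}) ∧
    (∀ i j : Fin r, r - 2 ≤ (i : ℕ) → i ≠ j → f i ∩ f j = ∅) ∧
    (∀ i, (e ∩ f i).card = 1) ∧ v ∉ e

/-!
Choose the edges greedily, from `u_r` down to `u_1`. When the edge through `u_i` is chosen,
each of the `r - i` edges chosen so far meets `e` in a single vertex `u_j ≠ u_i`, so by
linearity it meets at most `r - 1` of the `u_i`-edges other than `e` (one through each of its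
vertices outside `e`). Together with `e` itself this blocks at most `(r - i)(r - 1) + 1`
edges through `u_i`, and the degree bound leaves one free.
-/

namespace IsLinear

variable {V : Type*} [DecidableEq V] {r : ℕ} {E : Finset (Finset V)}

theorem eq_of_mem_of_mem (hlin : IsLinear r E) {a b : Finset V} (ha : a ∈ E) (hb : b ∈ E)
    {x y : V} (hxy : x ≠ y) (hxa : x ∈ a) (hya : y ∈ a) (hxb : x ∈ b) (hyb : y ∈ b) :
    a = b := by
  by_contra hab
  have hle := hlin.2 a ha b hb hab
  have hlt : 1 < #(a ∩ b) :=
    one_lt_card.2 ⟨x, mem_inter.2 ⟨hxa, hxb⟩, y, mem_inter.2 ⟨hya, hyb⟩, hxy⟩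
  omega

theorem card_inter_eq_one (hlin : IsLinear r E) {a b : Finset V} (ha : a ∈ E) (hb : b ∈ E)
    (hab : a ≠ b) {x : V} (hxa : x ∈ a) (hxb : x ∈ b) : #(a ∩ b) = 1 :=
  le_antisymm (hlin.2 a ha b hb hab) (card_pos.2 ⟨x, mem_inter.2 ⟨hxa, hxb⟩⟩)

/-- Each `x`-edge meeting `f` meets it in a vertex `w ≠ x`, and by linearity at most one
`x`-edge passes through `w`. -/
theorem card_filter_mem_not_disjoint_le (hlin : IsLinear r E) {f : Finset V} (hf : f ∈ E)
    {x : V} (hxf : x ∉ f) : #{g ∈ E | x ∈ g ∧ ¬Disjoint g f} ≤ r := by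
  rw [← hlin.1 f hf]
  refine card_le_card_of_forall_subsingleton (fun g w => w ∈ g) (fun g hg => ?_) ?_
  · obtain ⟨w, hwg, hwf⟩ := not_disjoint_iff.1 (mem_filter.1 hg).2.2
    exact ⟨w, hwf, hwg⟩
  · rintro w hwf g₁ ⟨hg₁, hwg₁⟩ g₂ ⟨hg₂, hwg₂⟩
    rw [mem_filter] at hg₁ hg₂
    exact hlin.eq_of_mem_of_mem hg₁.1 hg₂.1 (ne_of_mem_of_not_mem hwf hxf).symm
      hg₁.2.1 hwg₁ hg₂.2.1 hwg₂

theorem card_filter_mem_not_disjoint_erase_le (hlin : IsLinear r E) {e f : Finset V}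
    (he : e ∈ E) (hf : f ∈ E) (hfe : ¬Disjoint f e) {x : V} (hxe : x ∈ e) (hxf : x ∉ f) :
    #({g ∈ E | x ∈ g ∧ ¬Disjoint g f}.erase e) ≤ r - 1 := by
  have he_mem : e ∈ {g ∈ E | x ∈ g ∧ ¬Disjoint g f} :=
    mem_filter.2 ⟨he, hxe, fun h => hfe h.symm⟩
  rw [card_erase_of_mem he_mem]
  exact Nat.sub_le_sub_right (hlin.card_filter_mem_not_disjoint_le hf hxf) 1

theorem exists_edge_disjoint_of_card_mul_add_two_le_degree (hlin : IsLinear r E)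
    {e : Finset V} (he : e ∈ E) {x : V} (hxe : x ∈ e) (F : Finset (Finset V))
    (hF : ∀ f ∈ F, f ∈ E ∧ ¬Disjoint f e ∧ x ∉ f)
    (hdeg : #F * (r - 1) + 2 ≤ degree E x) :
    ∃ g ∈ E, x ∈ g ∧ g ≠ e ∧ ∀ f ∈ F, Disjoint g f := by
  set blocked := insert e (F.biUnion fun f => {g ∈ E | x ∈ g ∧ ¬Disjoint g f}.erase e)
  have hblocked : #blocked ≤ #F * (r - 1) + 1 :=
    calc #blocked ≤ #(F.biUnion fun f => {g ∈ E | x ∈ g ∧ ¬Disjoint g f}.erase e) + 1 :=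
          card_insert_le _ _
      _ ≤ ∑ f ∈ F, #({g ∈ E | x ∈ g ∧ ¬Disjoint g f}.erase e) + 1 := by
          gcongr; exact card_biUnion_le
      _ ≤ ∑ _f ∈ F, (r - 1) + 1 := by
          gcongr with f hf
          obtain ⟨hfE, hfe, hxf⟩ := hF f hf
          exact hlin.card_filter_mem_not_disjoint_erase_le he hfE hfe hxe hxf
      _ = #F * (r - 1) + 1 := by rw [sum_const, smul_eq_mul]
  obtain ⟨g, hgx, hg_free⟩ :=
    exists_mem_notMem_of_card_lt_card (s := blocked) (t := {g ∈ E | x ∈ g})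
      (by unfold degree at hdeg; omega)
  obtain ⟨hgE, hxg⟩ := mem_filter.1 hgx
  have hge : g ≠ e := fun h => hg_free (h ▸ mem_insert_self e _)
  refine ⟨g, hgE, hxg, hge, fun f hf => ?_⟩
  by_contra hgf
  exact hg_free (mem_insert_of_mem (mem_biUnion.2
    ⟨f, hf, mem_erase.2 ⟨hge, mem_filter.2 ⟨hgE, hxg, hgf⟩⟩⟩))

theorem exists_disjoint_edges_through (hlin : IsLinear r E) {e : Finset V} (he : e ∈ E) :
    ∀ {m : ℕ} (u : Fin m → V), Function.Injective u → (∀ i, u i ∈ e) →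
      (∀ i : Fin m, (m - 1 - i) * (r - 1) + 2 ≤ degree E (u i)) →
      ∃ f : Fin m → Finset V, (∀ i, f i ∈ E ∧ f i ≠ e ∧ u i ∈ f i) ∧
        Pairwise fun i j => Disjoint (f i) (f j)
  | 0, _, _, _, _ => ⟨Fin.elim0, fun i => i.elim0, fun i => i.elim0⟩
  | m + 1, u, hinj, hmem, hdeg => by
    obtain ⟨f, hf, hdisj⟩ := exists_disjoint_edges_through hlin he (u ∘ Fin.succ)
      (hinj.comp (Fin.succ_injective m)) (fun i => hmem i.succ)
      (fun i => by simpa [Nat.sub_sub, Nat.add_comm 1] using hdeg i.succ)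
    have hF : ∀ g ∈ univ.image f, g ∈ E ∧ ¬Disjoint g e ∧ u 0 ∉ g := by
      simp only [mem_image, mem_univ, true_and, forall_exists_index, forall_apply_eq_imp_iff]
      intro j
      obtain ⟨hfE, hfe, hufj⟩ := hf j
      refine ⟨hfE, not_disjoint_iff.2 ⟨_, hufj, hmem j.succ⟩, fun hu0 => hfe ?_⟩
      exact hlin.eq_of_mem_of_mem hfE he (hinj.ne (Fin.succ_ne_zero j).symm)
        hu0 hufj (hmem 0) (hmem j.succ)
    have hcard : #(univ.image f) * (r - 1) + 2 ≤ degree E (u 0) :=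
      calc #(univ.image f) * (r - 1) + 2 ≤ m * (r - 1) + 2 := by
            gcongr; simpa using card_image_le (s := univ) (f := f)
        _ ≤ degree E (u 0) := by simpa using hdeg 0
    obtain ⟨g, hgE, hug, hge, hgf⟩ :=
      hlin.exists_edge_disjoint_of_card_mul_add_two_le_degree he (hmem 0) _ hF hcard
    have hg_disj : ∀ j, Disjoint g (f j) := fun j => hgf _ (mem_image_of_mem f (mem_univ j))
    refine ⟨Fin.cons g f, Fin.cases ⟨hgE, hge, hug⟩ hf, ?_⟩
    intro i j hij
    induction i using Fin.cases <;> induction j using Fin.cases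
    · exact absurd rfl hij
    · exact hg_disj _
    · exact (hg_disj _).symm
    · exact hdisj (fun h => hij (congrArg Fin.succ h))

end IsLinear

/-- Greedy construction of a crown: if `e = {u_1,…,u_r}` satisfies
`d(u_1) ≥ (r-1)^2 + 2`, `d(u_i) ≥ (r-i)(r-1) + 2` for `2 ≤ i ≤ r-1` and `d(u_r) ≥ 2`,
then there are `r` pairwise disjoint edges, the `(r-i+1)`-st being a `u_i`-edge `≠ e`,
each meeting `e` in exactly one vertex; so `G` contains `C_{1r}`.
(Here `u i` with `i : Fin r` denotes `u_{i+1}` of the paper.) -/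
theorem greedy_crown {V : Type*} [DecidableEq V]
    (r : ℕ) (hr : 3 ≤ r) (E : Finset (Finset V)) (hlin : IsLinear r E)
    (e : Finset V) (he : e ∈ E) (u : Fin r → V)
    (hinj : Function.Injective u) (hmem : ∀ i, u i ∈ e)
    (hd1 : (r - 1) ^ 2 + 2 ≤ degree E (u ⟨0, by omega⟩))
    (hdmid : ∀ i : Fin r, 1 ≤ (i : ℕ) → (i : ℕ) ≤ r - 2 →
      (r - 1 - (i : ℕ)) * (r - 1) + 2 ≤ degree E (u i))
    (hdr : 2 ≤ degree E (u ⟨r - 1, by omega⟩)) :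
    (∃ f : Fin r → Finset V,
      (∀ i, f i ∈ E) ∧ (∀ i, f i ≠ e) ∧ (∀ i, u i ∈ f i) ∧
      (∀ i j, i ≠ j → f i ∩ f j = ∅) ∧
      (∀ i, (e ∩ f i).card = 1)) ∧ HasCrown r E := by
  have hdeg : ∀ i : Fin r, (r - 1 - i) * (r - 1) + 2 ≤ degree E (u i) := by
    rintro ⟨i, hi⟩
    rcases Nat.eq_zero_or_pos i with rfl | hi0
    · simpa [sq] using hd1
    rcases Nat.lt_or_ge i (r - 1) with hir | hir
    · exact hdmid ⟨i, hi⟩ hi0 (show i ≤ r - 2 by omega)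
    · obtain rfl : i = r - 1 := by omega
      simpa using hdr
  obtain ⟨f, hf, hdisj⟩ := hlin.exists_disjoint_edges_through he u hinj hmem hdeg
  have hinter : ∀ i j, i ≠ j → f i ∩ f j = ∅ := fun i j hij =>
    disjoint_iff_inter_eq_empty.1 (hdisj hij)
  have hcard : ∀ i, #(e ∩ f i) = 1 := fun i =>
    hlin.card_inter_eq_one he (hf i).1 (hf i).2.1.symm (hmem i) (hf i).2.2
  exact ⟨⟨f, fun i => (hf i).1, fun i => (hf i).2.1, fun i => (hf i).2.2, hinter, hcard⟩,
    ⟨e, he, f, fun i => (hf i).1, fun i => (hf i).2.1, hinter, hcard⟩⟩
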